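/- Let G be a finite simple graph and let k be a positive integer with β(G) ≤ k < ν(G). Then G has a maximal matching M of size exactly k that has an augmenting P4, i.e., there exist vertices u, w, y, v with edges uw, wy, yv in G, wy ∈ M, and u and v not saturated by M. -/

import Mathlib

open SimpleGraph

variable {V : Type*}

/-- `M` is a matching in `G`: a set of pairwise vertex-disjoint edges of `G`. -/
def IsMatchingIn (G : SimpleGraph V) (M : Finset (Sym2 V)) : Prop :=
  (∀ e ∈ M, e ∈ G.edgeSet) ∧
    ∀ e ∈ M, ∀ f ∈ M, e ≠ f → ∀ v : V, v ∈ e → v ∉ f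

/-- `M` is a maximal matching in `G`: a matching not properly contained in another matching. -/
def IsMaximalMatchingIn (G : SimpleGraph V) (M : Finset (Sym2 V)) : Prop :=
  IsMatchingIn G M ∧ ∀ M', IsMatchingIn G M' → M ⊆ M' → M' = M

/-- `M` saturates (covers) the vertex `v`. -/
def Sat (M : Finset (Sym2 V)) (v : V) : Prop := ∃ e ∈ M, v ∈ e

/-- The matching number `ν(G)`. -/
noncomputable def nuNum (G : SimpleGraph V) : ℕ :=
  sSup {n | ∃ M, IsMatchingIn G M ∧ M.card = n}

/-- The minimum maximal matching number `β(G)`. -/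
noncomputable def betaNum (G : SimpleGraph V) : ℕ :=
  sInf {n | ∃ M, IsMaximalMatchingIn G M ∧ M.card = n}

/-- The matching gap `μ(G) = ν(G) - β(G)`. -/
noncomputable def muGap (G : SimpleGraph V) : ℕ := nuNum G - betaNum G

/-- `M` has an augmenting `P₄`: a path `u w y v` on four distinct vertices with
`wy ∈ M` and `u`, `v` not saturated by `M`. -/
def HasAugP4 (G : SimpleGraph V) (M : Finset (Sym2 V)) : Prop :=
  ∃ u w y v : V, u ≠ w ∧ u ≠ y ∧ u ≠ v ∧ w ≠ y ∧ w ≠ v ∧ y ≠ v ∧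
    G.Adj u w ∧ G.Adj w y ∧ G.Adj y v ∧ s(w, y) ∈ M ∧ ¬ Sat M u ∧ ¬ Sat M v


/-!
Let `M` be a maximal matching and `N` a larger matching. Some edge `ux ∈ N` has `u` unsaturated
by `M`, and maximality gives an edge `xy ∈ M`. If `y` has an unsaturated neighbour `z ≠ u`, then
`u x y z` is an augmenting `P₄`. Otherwise swapping `xy` for `ux` gives a maximal matching of the
same size sharing one more edge with `N`, and we repeat.

Replacing the middle edge of an augmenting `P₄` by its two outer edges keeps a matching maximal
and raises its size by one. Alternating the two steps climbs from a minimum maximal matching up to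
size `ν(G) - 1`.
-/

open Finset

lemma Finset.sdiff_insert_erase_ssubset {α : Type*} [DecidableEq α] {s t : Finset α} {a b : α}
    (has : a ∈ s) (hat : a ∉ t) (hbs : b ∉ s) : s \ insert a (t.erase b) ⊂ s \ t := by
  refine (ssubset_iff_of_subset fun c hc => ?_).2 ⟨a, mem_sdiff.2 ⟨has, hat⟩, by simp⟩
  simp only [mem_sdiff, mem_insert, mem_erase, not_or, not_and] at hc ⊢
  exact ⟨hc.1, fun hct => hc.2.2 (by rintro rfl; exact hbs hc.1) hct⟩

section

variable {V : Type*} {G : SimpleGraph V} {M N : Finset (Sym2 V)} {a b u v x y : V} {k : ℕ}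

lemma sat_insert [DecidableEq V] {e : Sym2 V} : Sat (insert e M) v ↔ v ∈ e ∨ Sat M v := by
  simp [Sat]

lemma Sat.mono (h : Sat M v) (hMN : M ⊆ N) : Sat N v :=
  let ⟨e, he, hv⟩ := h
  ⟨e, hMN he, hv⟩

lemma Sat.erase [DecidableEq V] {e : Sym2 V} (h : Sat M v) (hv : v ∉ e) : Sat (M.erase e) v := by
  obtain ⟨f, hf, hvf⟩ := h
  exact ⟨f, mem_erase.2 ⟨by rintro rfl; exact hv hvf, hf⟩, hvf⟩

lemma Sat.exists_mem (h : Sat M x) : ∃ y, s(x, y) ∈ M := by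
  obtain ⟨e, he, hx⟩ := h
  obtain ⟨y, rfl⟩ := Sym2.mem_iff_exists.1 hx
  exact ⟨y, he⟩

lemma notMem_of_not_sat (h : ¬ Sat M b) : s(a, b) ∉ M :=
  fun hab => h ⟨_, hab, Sym2.mem_mk_right a b⟩

namespace IsMatchingIn

lemma adj_of_mem (hM : IsMatchingIn G M) (h : s(a, b) ∈ M) : G.Adj a b := hM.1 _ h

lemma subset (hM : IsMatchingIn G M) (hNM : N ⊆ M) : IsMatchingIn G N :=
  ⟨fun e he => hM.1 e (hNM he), fun e he f hf => hM.2 e (hNM he) f (hNM hf)⟩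

lemma insert_of_not_sat [DecidableEq V] (hM : IsMatchingIn G M) (hab : G.Adj a b)
    (ha : ¬ Sat M a) (hb : ¬ Sat M b) : IsMatchingIn G (insert s(a, b) M) := by
  have hfresh : ∀ f ∈ M, ∀ v ∈ s(a, b), v ∉ f := by
    intro f hf v hv hvf
    rcases Sym2.mem_iff.1 hv with rfl | rfl
    exacts [ha ⟨f, hf, hvf⟩, hb ⟨f, hf, hvf⟩]
  refine ⟨?_, ?_⟩
  · simpa [forall_mem_insert] using ⟨hab, hM.1⟩
  · intro e he f hf hef v hve hvf
    rcases mem_insert.1 he with rfl | he <;> rcases mem_insert.1 hf with rfl | hf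
    · exact hef rfl
    · exact hfresh f hf v hve hvf
    · exact hfresh e he v hvf hve
    · exact hM.2 e he f hf hef v hve hvf

lemma not_sat_erase [DecidableEq V] (hM : IsMatchingIn G M) (h : s(a, b) ∈ M)
    (hv : v ∈ s(a, b)) : ¬ Sat (M.erase s(a, b)) v := by
  rintro ⟨f, hf, hvf⟩
  obtain ⟨hne, hfM⟩ := mem_erase.1 hf
  exact hM.2 f hfM _ h hne v hvf hv

lemma card_insert_erase [DecidableEq V] (hM : IsMatchingIn G M) (hxy : s(x, y) ∈ M) :
    (insert s(u, x) (M.erase s(x, y))).card = M.card := by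
  rw [card_insert_of_notMem (notMem_of_not_sat (hM.not_sat_erase hxy (Sym2.mem_mk_left x y))),
    card_erase_add_one hxy]

/-- Both endpoints of an edge of `N` are saturated by `N`, so if `N` is the larger matching its
`2|N|` saturated vertices cannot all be covered by the at most `2|M|` vertices of `M`. -/
lemma exists_sat_not_sat_of_card_lt (hN : IsMatchingIn G N) (h : M.card < N.card) :
    ∃ v, Sat N v ∧ ¬ Sat M v := by
  classical
  by_contra! hNM
  have hsub : N.biUnion Sym2.toFinset ⊆ M.biUnion Sym2.toFinset := by
    intro v hv
    obtain ⟨e, he, hve⟩ := mem_biUnion.1 hv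
    obtain ⟨f, hf, hvf⟩ := hNM v ⟨e, he, Sym2.mem_toFinset.1 hve⟩
    exact mem_biUnion.2 ⟨f, hf, Sym2.mem_toFinset.2 hvf⟩
  have hNcard : (N.biUnion Sym2.toFinset).card = N.card * 2 := by
    rw [card_biUnion fun e he f hf hef => disjoint_left.2 fun v hve hvf =>
      hN.2 e he f hf hef v (Sym2.mem_toFinset.1 hve) (Sym2.mem_toFinset.1 hvf)]
    exact sum_const_nat fun e he =>
      Sym2.card_toFinset_of_not_isDiag e (G.not_isDiag_of_mem_edgeSet (hN.1 e he))
  have hMcard : (M.biUnion Sym2.toFinset).card ≤ M.card * 2 :=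
    card_biUnion_le_card_mul _ _ _ fun e _ => by
      rw [Sym2.card_toFinset]
      split_ifs <;> omega
  have := card_le_card hsub
  omega

end IsMatchingIn

lemma isMaximalMatchingIn_iff : IsMaximalMatchingIn G M ↔
    IsMatchingIn G M ∧ ∀ a b, G.Adj a b → Sat M a ∨ Sat M b := by
  classical
  refine ⟨fun ⟨hM, hmax⟩ => ⟨hM, fun a b hab => ?_⟩,
    fun ⟨hM, hcover⟩ => ⟨hM, fun M' hM' hMM' => subset_antisymm ?_ hMM'⟩⟩
  · by_contra! hsat
    have := hmax _ (hM.insert_of_not_sat hab hsat.1 hsat.2) (subset_insert _ _)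
    exact notMem_of_not_sat hsat.2 (this ▸ mem_insert_self _ _)
  · intro f hf
    induction f using Sym2.ind with
    | _ a b =>
      by_contra hfM
      have hshared : ∀ v ∈ s(a, b), ¬ Sat M v := by
        rintro v hv ⟨g, hg, hvg⟩
        exact hM'.2 g (hMM' hg) _ hf (by rintro rfl; exact hfM hg) v hvg hv
      rcases hcover a b (hM'.adj_of_mem hf) with h | h
      exacts [hshared a (Sym2.mem_mk_left a b) h, hshared b (Sym2.mem_mk_right a b) h]

namespace IsMaximalMatchingIn

/-- Flipping an augmenting `P₄` `u w y v`: `wy` is replaced by `uw` and `yv`. -/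
lemma exists_card_eq_succ (hM : IsMaximalMatchingIn G M) (hP4 : HasAugP4 G M) :
    ∃ M', IsMaximalMatchingIn G M' ∧ M'.card = M.card + 1 := by
  classical
  obtain ⟨u, w, y, v, -, huy, huv, -, hwv, -, huw, -, hyv, hwy, hu, hv⟩ := hP4
  set M₀ := M.erase s(w, y)
  have h₀ : IsMatchingIn G M₀ := hM.1.subset (erase_subset _ _)
  have hu₀ : ¬ Sat M₀ u := fun h => hu (h.mono (erase_subset _ _))
  have hv₀ : ¬ Sat M₀ v := fun h => hv (h.mono (erase_subset _ _))
  have hw₀ : ¬ Sat M₀ w := hM.1.not_sat_erase hwy (Sym2.mem_mk_left w y)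
  have hy₀ : ¬ Sat M₀ y := hM.1.not_sat_erase hwy (Sym2.mem_mk_right w y)
  have hy₁ : ¬ Sat (insert s(u, w) M₀) y := by
    simp [sat_insert, huy.symm, (hM.1.adj_of_mem hwy).ne', hy₀]
  have hv₁ : ¬ Sat (insert s(u, w) M₀) v := by
    simp [sat_insert, hv₀, huv.symm, hwv.symm]
  have hsat : ∀ z, Sat M z → Sat (insert s(y, v) (insert s(u, w) M₀)) z := by
    intro z hz
    by_cases hzwy : z ∈ s(w, y)
    · rcases Sym2.mem_iff.1 hzwy with rfl | rfl <;> simp [sat_insert]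
    · exact sat_insert.2 <| .inr <| sat_insert.2 <| .inr <| hz.erase hzwy
  have hM' := (h₀.insert_of_not_sat huw hu₀ hw₀).insert_of_not_sat hyv hy₁ hv₁
  refine ⟨_, isMaximalMatchingIn_iff.2 ⟨hM', ?_⟩, ?_⟩
  · exact fun a b hab => ((isMaximalMatchingIn_iff.1 hM).2 a b hab).imp (hsat a) (hsat b)
  · rw [card_insert_of_notMem (notMem_of_not_sat hv₁),
      card_insert_of_notMem (notMem_of_not_sat hw₀), card_erase_add_one hwy]

lemma insert_erase [DecidableEq V] (hM : IsMaximalMatchingIn G M) (hxy : s(x, y) ∈ M)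
    (hux : G.Adj u x) (hu : ¬ Sat M u) (hy : ∀ z, G.Adj y z → ¬ Sat M z → z = u) :
    IsMaximalMatchingIn G (insert s(u, x) (M.erase s(x, y))) := by
  set M' := insert s(u, x) (M.erase s(x, y))
  have hM₀ : IsMatchingIn G (M.erase s(x, y)) := hM.1.subset (erase_subset _ _)
  have hu₀ : ¬ Sat (M.erase s(x, y)) u := fun h => hu (h.mono (erase_subset _ _))
  have hsat : ∀ z, Sat M z → z ≠ y → Sat M' z := by
    intro z hz hzy
    by_cases hzx : z = x
    · exact sat_insert.2 (.inl (hzx ▸ Sym2.mem_mk_right u x))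
    · exact sat_insert.2 (.inr (hz.erase (by simp [hzx, hzy])))
  have hcover : ∀ a b, G.Adj a b → Sat M a → Sat M' a ∨ Sat M' b := by
    intro a b hab ha
    by_cases hay : a = y
    · subst hay
      by_cases hb : Sat M b
      · exact .inr (hsat b hb hab.ne')
      · exact .inr (hy b hab hb ▸ sat_insert.2 (.inl (Sym2.mem_mk_left u x)))
    · exact .inl (hsat a ha hay)
  have hM' : IsMatchingIn G M' :=
    hM₀.insert_of_not_sat hux hu₀ (hM.1.not_sat_erase hxy (Sym2.mem_mk_left x y))
  refine isMaximalMatchingIn_iff.2 ⟨hM', fun a b hab => ?_⟩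
  rcases (isMaximalMatchingIn_iff.1 hM).2 a b hab with ha | hb
  · exact hcover a b hab ha
  · exact (hcover b a hab.symm hb).symm

lemma exists_hasAugP4_of_card_lt {M : Finset (Sym2 V)} (hM : IsMaximalMatchingIn G M)
    (hN : IsMatchingIn G N) (hlt : M.card < N.card) :
    ∃ M', IsMaximalMatchingIn G M' ∧ M'.card = M.card ∧ HasAugP4 G M' := by
  classical
  induction hn : (N \ M).card using Nat.strong_induction_on generalizing M with
  | _ n ih =>
  obtain ⟨u, hNu, hu⟩ := hN.exists_sat_not_sat_of_card_lt hlt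
  obtain ⟨x, hux⟩ := hNu.exists_mem
  have hux' := hN.adj_of_mem hux
  obtain ⟨y, hxy⟩ := (((isMaximalMatchingIn_iff.1 hM).2 u x hux').resolve_left hu).exists_mem
  have hxy' := hM.1.adj_of_mem hxy
  have huy : u ≠ y := by rintro rfl; exact hu ⟨_, hxy, Sym2.mem_mk_right x u⟩
  by_cases hz : ∃ z, G.Adj y z ∧ ¬ Sat M z ∧ z ≠ u
  · obtain ⟨z, hyz, hz, hzu⟩ := hz
    have hxz : x ≠ z := by rintro rfl; exact hz ⟨_, hxy, Sym2.mem_mk_left x y⟩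
    exact ⟨M, hM, rfl, u, x, y, z, hux'.ne, huy, hzu.symm, hxy'.ne, hxz, hyz.ne, hux', hxy', hyz,
      hxy, hu, hz⟩
  · push Not at hz
    have hxyN : s(x, y) ∉ N := fun h =>
      hN.2 _ h _ hux (by simp [huy.symm, hux'.ne.symm]) x (Sym2.mem_mk_left x y)
        (Sym2.mem_mk_right u x)
    have hcloser : N \ insert s(u, x) (M.erase s(x, y)) ⊂ N \ M :=
      Finset.sdiff_insert_erase_ssubset hux (fun h => hu ⟨_, h, Sym2.mem_mk_left u x⟩) hxyN
    have hcard : (insert s(u, x) (M.erase s(x, y))).card = M.card := hM.1.card_insert_erase hxy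
    obtain ⟨M', hM', hcard', hP4⟩ := ih _ (hn ▸ card_lt_card hcloser)
      (hM.insert_erase hxy hux' hu hz) (hcard ▸ hlt) rfl
    exact ⟨M', hM', hcard'.trans hcard, hP4⟩

end IsMaximalMatchingIn

lemma bddAbove_card_isMatchingIn_of_nuNum_pos (h : 0 < nuNum G) :
    BddAbove {n | ∃ M, IsMatchingIn G M ∧ M.card = n} := by
  by_contra hbdd
  rw [nuNum, Nat.sSup_of_not_bddAbove hbdd] at h
  exact h.false

lemma exists_isMaximalMatchingIn_card_eq_nuNum (h : 0 < nuNum G) :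
    ∃ N, IsMaximalMatchingIn G N ∧ N.card = nuNum G := by
  have hbdd := bddAbove_card_isMatchingIn_of_nuNum_pos h
  have hmem : nuNum G ∈ {n | ∃ M, IsMatchingIn G M ∧ M.card = n} :=
    Nat.sSup_mem ⟨0, ∅, ⟨by simp, by simp⟩, rfl⟩ hbdd
  obtain ⟨N, hN, hcard⟩ := hmem
  refine ⟨N, ⟨hN, fun M hM hNM => (eq_of_subset_of_card_le hNM ?_).symm⟩, hcard⟩
  exact (le_csSup hbdd ⟨M, hM, rfl⟩).trans hcard.ge

lemma exists_isMaximalMatchingIn_card_eq (hβ : betaNum G ≤ k) (hν : k < nuNum G) :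
    ∃ M, IsMaximalMatchingIn G M ∧ M.card = k := by
  obtain ⟨N, hN, hNcard⟩ := exists_isMaximalMatchingIn_card_eq_nuNum (Nat.zero_lt_of_lt hν)
  induction k, hβ using Nat.le_induction with
  | base =>
    exact Nat.sInf_mem (s := {n | ∃ M, IsMaximalMatchingIn G M ∧ M.card = n})
      ⟨_, N, hN, rfl⟩
  | succ k _ ih =>
    obtain ⟨M, hM, rfl⟩ := ih (Nat.lt_of_succ_lt hν)
    obtain ⟨M', hM', hcard, hP4⟩ := hM.exists_hasAugP4_of_card_lt hN.1 (by omega)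
    rw [← hcard]
    exact hM'.exists_card_eq_succ hP4

end

theorem stmt_2_general {V : Type*} (G : SimpleGraph V) (k : ℕ)
    (hk₁ : betaNum G ≤ k) (hk₂ : k < nuNum G) :
    ∃ M : Finset (Sym2 V), IsMaximalMatchingIn G M ∧ M.card = k ∧ HasAugP4 G M := by
  obtain ⟨N, hN, hNcard⟩ := exists_isMaximalMatchingIn_card_eq_nuNum (Nat.zero_lt_of_lt hk₂)
  obtain ⟨M, hM, rfl⟩ := exists_isMaximalMatchingIn_card_eq hk₁ hk₂
  exact hM.exists_hasAugP4_of_card_lt hN.1 (hNcard ▸ hk₂)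

theorem stmt_2 {V : Type*} [Fintype V] (G : SimpleGraph V) (k : ℕ) (hk : 0 < k)
    (hk₁ : betaNum G ≤ k) (hk₂ : k < nuNum G) :
    ∃ M : Finset (Sym2 V), IsMaximalMatchingIn G M ∧ M.card = k ∧ HasAugP4 G M :=
  stmt_2_general G k hk₁ hk₂
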